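/- arXiv:2405.17174 — 2 statements merged into one kernel-verified Lean document; each statement's English description precedes it below -/
import Mathlib

section
/- Let μ be a dominant integral coweight and let w ∈ W₀ be a minimal coset representative for μ. Then for every positive root α ∈ Φ⁺ and every point v of the fundamental alcove A one has ⟨α, μ⟩ + ⟨w(α), v⟩ > 0; equivalently, for every α ∈ Φ⁺, either ⟨α, μ⟩ ≥ 1, or ⟨α, μ⟩ = 0 and w(α) ∈ Φ⁺. (This expresses that the affine transformation t_{−w(μ)}w is the minimal-length element of its coset t_{−w(μ)}W₀ in the extended affine Weyl group.) -/
/-!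
Common framework: a finite crystallographic reduced root system `Φ` inside the dual
of a finite-dimensional real vector space `V`, with a choice of positive roots `Pos`,
simple roots `Delta`, coroots, and the finite Weyl group `W` (a subgroup of linear
automorphisms of `V` generated by the root reflections).  We also set up affine
hyperplanes, the fundamental alcove, separation counts, and alcove walks.
-/

open Module Finset

section BasicDefs

variable {V : Type*} [AddCommGroup V] [Module ℝ V]

/-- The affine transformation `t_ν u : v ↦ u(v) + ν`. -/
def affT (ν : V) (u : V ≃ₗ[ℝ] V) : V → V := fun v => u v + ν

/-- The affine hyperplane `H_{α,n} = {v : ⟨α, v⟩ = n}`. -/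
def affHyp (α : Dual ℝ V) (n : ℤ) : Set V := {v | α v = (n : ℝ)}

/-- `H_{α,n}` separates `S` and `T`: the affine functional `⟨α, ·⟩ - n` is strictly
positive everywhere on one of the two sets and strictly negative everywhere on the other. -/
def SepBy (α : Dual ℝ V) (n : ℤ) (S T : Set V) : Prop :=
  ((∀ v ∈ S, α v < (n : ℝ)) ∧ ∀ v ∈ T, (n : ℝ) < α v) ∨
  ((∀ v ∈ S, (n : ℝ) < α v) ∧ ∀ v ∈ T, α v < (n : ℝ))

/-- The contragredient action of `w` on `V*`:  `(w · α)(v) = α (w⁻¹ v)`. -/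
def dAct (w : V ≃ₗ[ℝ] V) (α : Dual ℝ V) : Dual ℝ V := α.comp w.symm.toLinearMap

end BasicDefs

/-- A finite crystallographic reduced root system spanning the dual of `V`, together
with a system of positive roots, the simple roots, the coroots and the Weyl group. -/
structure RootSystemCtx (V : Type*) [AddCommGroup V] [Module ℝ V]
    [FiniteDimensional ℝ V] where
  Φ : Finset (Dual ℝ V)
  Pos : Finset (Dual ℝ V)
  Delta : Finset (Dual ℝ V)
  coroot : Dual ℝ V → V
  W : Subgroup (V ≃ₗ[ℝ] V)
  pos_subset : Pos ⊆ Φ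
  delta_subset : Delta ⊆ Pos
  root_ne_zero : ∀ α ∈ Φ, α ≠ 0
  span_eq_top : Submodule.span ℝ (Φ : Set (Dual ℝ V)) = ⊤
  pos_partition : ∀ α ∈ Φ, (α ∈ Pos ∧ -α ∉ Pos) ∨ (-α ∈ Pos ∧ α ∉ Pos)
  coroot_self : ∀ α ∈ Φ, α (coroot α) = 2
  crystallographic : ∀ α ∈ Φ, ∀ β ∈ Φ, ∃ n : ℤ, β (coroot α) = (n : ℝ)
  reduced : ∀ α ∈ Φ, ∀ c : ℝ, c • α ∈ Φ → c = 1 ∨ c = -1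
  root_reflect_mem : ∀ α ∈ Φ, ∀ β ∈ Φ, β - β (coroot α) • α ∈ Φ
  delta_indep : LinearIndependent ℝ (fun x : {a : Dual ℝ V // a ∈ Delta} => x.1)
  pos_of_delta : ∀ α ∈ Pos, ∃ c : Dual ℝ V → ℕ, α = ∑ β ∈ Delta, (c β : ℝ) • β
  W_gen : W = Subgroup.closure
    {g : V ≃ₗ[ℝ] V | ∃ α ∈ Φ, ∀ v : V, g v = v - α v • coroot α}

namespace RootSystemCtx

variable {V : Type*} [AddCommGroup V] [Module ℝ V] [FiniteDimensional ℝ V]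

section CtxDefs

variable (C : RootSystemCtx V)

/-- `ρ`, the half sum of the positive roots. -/
noncomputable def rho : Dual ℝ V := (2⁻¹ : ℝ) • ∑ α ∈ C.Pos, α

open Classical in
/-- The inversion set `{α ∈ Φ⁺ : w(α) ∈ -Φ⁺}` of `w`. -/
noncomputable def invSet (w : V ≃ₗ[ℝ] V) : Finset (Dual ℝ V) :=
  C.Pos.filter fun α => -(dAct w α) ∈ C.Pos

/-- The length `ℓ(w) = #{α ∈ Φ⁺ : w(α) ∈ -Φ⁺}`. -/
noncomputable def len (w : V ≃ₗ[ℝ] V) : ℕ := (C.invSet w).card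

/-- `lam` is an integral coweight: `⟨α, lam⟩ ∈ ℤ` for all roots `α`. -/
def IsIntegral (lam : V) : Prop := ∀ α ∈ C.Φ, ∃ n : ℤ, α lam = (n : ℝ)

/-- `lam` is dominant: `⟨α, lam⟩ ≥ 0` for all positive roots `α`. -/
def IsDominant (lam : V) : Prop := ∀ α ∈ C.Pos, 0 ≤ α lam

/-- `w` is a minimal(-length) coset representative for `lam`, i.e. `w ∈ W₀` and
`ℓ(w) ≤ ℓ(v)` for every `v ∈ w W_{0,lam}`. -/
def IsMinRep (w : V ≃ₗ[ℝ] V) (lam : V) : Prop :=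
  w ∈ C.W ∧ ∀ u ∈ C.W, u lam = lam → C.len w ≤ C.len (w * u)

/-- The (open) fundamental alcove `A`. -/
def alcove : Set V := {v | ∀ α ∈ C.Pos, 0 < α v ∧ α v < 1}

/-- The closure of the fundamental alcove. -/
def closedAlcove : Set V := {v | ∀ α ∈ C.Pos, 0 ≤ α v ∧ α v ≤ 1}

/-- The open dominant Weyl chamber `C`. -/
def chamber : Set V := {v | ∀ α ∈ C.Pos, 0 < α v}

/-- The number of affine hyperplanes `H_{α,n}` (`α ∈ Φ⁺`, `n ∈ ℤ`) separating `S` and `T`. -/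
noncomputable def sepCount (S T : Set V) : ℕ :=
  Set.ncard {p : Dual ℝ V × ℤ | p.1 ∈ C.Pos ∧ SepBy p.1 p.2 S T}

/-- The length of an affine transformation: the number of affine hyperplanes
separating `A` and `f(A)`. -/
noncomputable def affLen (f : V → V) : ℕ := C.sepCount C.alcove (f '' C.alcove)

/-- The coroot lattice `Q^∨`. -/
def Qv : AddSubgroup V := AddSubgroup.closure (C.coroot '' (C.Φ : Set (Dual ℝ V)))

/-- `b` is an alcove: a transform of the fundamental alcove under the affine Weyl
group `Q^∨ ⋊ W₀`. -/
def IsAlcoveSet (b : Set V) : Prop := ∃ ν ∈ C.Qv, ∃ u ∈ C.W, b = affT ν u '' C.alcove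

/-- The affine reflection through the hyperplane `H_{α,n}`. -/
def reflH (α : Dual ℝ V) (n : ℤ) : V → V := fun v => v - (α v - (n : ℝ)) • C.coroot α

/-- `H_{α,n}` (with `α ∈ Φ⁺`) supports a codimension-one face of the alcove `b`:
it is the unique affine hyperplane separating `b` from its reflection through `H_{α,n}`. -/
def IsWall (α : Dual ℝ V) (n : ℤ) (b : Set V) : Prop :=
  α ∈ C.Pos ∧ SepBy α n b (C.reflH α n '' b) ∧
    ∀ β ∈ C.Pos, ∀ m : ℤ, SepBy β m b (C.reflH α n '' b) → β = α ∧ m = n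

open Classical in
/-- `Φ_M = Φ ∩ ℤΔ_M`, the roots of the Levi attached to `Δ_M ⊆ Δ`. -/
noncomputable def PhiM (ΔM : Finset (Dual ℝ V)) : Finset (Dual ℝ V) :=
  C.Φ.filter fun α => α ∈ Submodule.span ℤ (ΔM : Set (Dual ℝ V))

/-- `W_{0,M}`, the subgroup of `W₀` generated by the reflections in the roots of `Φ_M`. -/
def WM (ΔM : Finset (Dual ℝ V)) : Subgroup (V ≃ₗ[ℝ] V) :=
  Subgroup.closure {g : V ≃ₗ[ℝ] V | ∃ α ∈ C.PhiM ΔM, ∀ v : V, g v = v - α v • C.coroot α}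

/-- `lam` is `M`-dominant: `⟨β, lam⟩ ≥ 0` for every `β ∈ Φ_M⁺ = Φ_M ∩ Φ⁺`. -/
def IsMDominant (ΔM : Finset (Dual ℝ V)) (lam : V) : Prop :=
  ∀ β, β ∈ C.PhiM ΔM → β ∈ C.Pos → 0 ≤ β lam

end CtxDefs

/-- An alcove walk of length `len`, starting at the fundamental alcove: at each step
`i < len` we are given a wall `H_{root i, lev i}` of the alcove `alc i`, and
`alc (i+1)` is either `alc i` (a folding) or its reflection through that wall (a crossing). -/
structure Walk (C : RootSystemCtx V) where
  len : ℕ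
  alc : ℕ → Set V
  root : ℕ → Dual ℝ V
  lev : ℕ → ℤ
  start : alc 0 = C.alcove
  isAlcove : ∀ i ≤ len, C.IsAlcoveSet (alc i)
  wall : ∀ i < len, C.IsWall (root i) (lev i) (alc i)
  step : ∀ i < len, alc (i + 1) = alc i ∨ alc (i + 1) = C.reflH (root i) (lev i) '' alc i

namespace Walk

variable {C : RootSystemCtx V}

/-- Step `i` is a folding. -/
def IsFolding (Wk : Walk C) (i : ℕ) : Prop := Wk.alc (i + 1) = Wk.alc i

/-- Step `i` is a crossing. -/
def IsCrossing (Wk : Walk C) (i : ℕ) : Prop := Wk.alc (i + 1) ≠ Wk.alc i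

/-- The affine functional of step `i` is positive on the current alcove
(positivity for the dominant orientation). -/
def PosAt (Wk : Walk C) (i : ℕ) : Prop := ∀ v ∈ Wk.alc i, (Wk.lev i : ℝ) < Wk.root i v

/-- The affine functional of step `i` is negative on the current alcove. -/
def NegAt (Wk : Walk C) (i : ℕ) : Prop := ∀ v ∈ Wk.alc i, Wk.root i v < (Wk.lev i : ℝ)

open Classical in
/-- `c⁺`: the number of crossings positive for the dominant orientation. -/
noncomputable def cPlus (Wk : Walk C) : ℕ :=
  ((Finset.range Wk.len).filter fun i => Wk.IsCrossing i ∧ Wk.PosAt i).card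

open Classical in
/-- `f⁺`: the number of foldings. -/
noncomputable def fPlus (Wk : Walk C) : ℕ :=
  ((Finset.range Wk.len).filter fun i => Wk.IsFolding i).card

/-- Positively folded for the dominant orientation. -/
def PosFolded (Wk : Walk C) : Prop := ∀ i < Wk.len, Wk.IsFolding i → Wk.NegAt i

/-- Positivity of step `i` for the parabolic orientation attached to the Levi root
set `ΦM`: for `α ∉ Φ_M` positivity on the current alcove; for `α ∈ Φ_M` the sign on
the current alcove agrees with the sign on the fundamental alcove. -/
def PosAtP (Wk : Walk C) (ΦM : Finset (Dual ℝ V)) (i : ℕ) : Prop :=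
  (Wk.root i ∉ ΦM ∧ Wk.PosAt i) ∨
  (Wk.root i ∈ ΦM ∧
    ((Wk.PosAt i ∧ ∀ v ∈ C.alcove, (Wk.lev i : ℝ) < Wk.root i v) ∨
     (Wk.NegAt i ∧ ∀ v ∈ C.alcove, Wk.root i v < (Wk.lev i : ℝ))))

/-- Negativity of step `i` for the parabolic orientation attached to `ΦM`. -/
def NegAtP (Wk : Walk C) (ΦM : Finset (Dual ℝ V)) (i : ℕ) : Prop :=
  (Wk.root i ∉ ΦM ∧ Wk.NegAt i) ∨
  (Wk.root i ∈ ΦM ∧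
    ((Wk.PosAt i ∧ ∀ v ∈ C.alcove, Wk.root i v < (Wk.lev i : ℝ)) ∨
     (Wk.NegAt i ∧ ∀ v ∈ C.alcove, (Wk.lev i : ℝ) < Wk.root i v)))

open Classical in
/-- `c⁺` for the parabolic orientation attached to `ΦM`. -/
noncomputable def cPlusP (Wk : Walk C) (ΦM : Finset (Dual ℝ V)) : ℕ :=
  ((Finset.range Wk.len).filter fun i => Wk.IsCrossing i ∧ Wk.PosAtP ΦM i).card

/-- Positively folded for the parabolic orientation attached to `ΦM`. -/
def PosFoldedP (Wk : Walk C) (ΦM : Finset (Dual ℝ V)) : Prop :=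
  ∀ i < Wk.len, Wk.IsFolding i → Wk.NegAtP ΦM i

/-- A minimal gallery from the fundamental alcove to `b`: all steps are crossings,
it ends at `b`, and its length is the number of hyperplanes separating `A` and `b`. -/
def IsMinGallery (Wk : Walk C) (b : Set V) : Prop :=
  (∀ i < Wk.len, Wk.IsCrossing i) ∧ Wk.alc Wk.len = b ∧
    Wk.len = C.sepCount C.alcove b

/-- Two walks have the same type: same length and, at each step, the pullbacks of the
crossed/folded hyperplanes to the fundamental alcove coincide. -/
def SameType (Wk G : Walk C) : Prop :=
  Wk.len = G.len ∧ ∀ i < Wk.len,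
    ∃ ν₁ ∈ C.Qv, ∃ u₁ ∈ C.W, ∃ ν₂ ∈ C.Qv, ∃ u₂ ∈ C.W,
      Wk.alc i = affT ν₁ u₁ '' C.alcove ∧ G.alc i = affT ν₂ u₂ '' C.alcove ∧
      affT ν₁ u₁ ⁻¹' affHyp (Wk.root i) (Wk.lev i) =
        affT ν₂ u₂ ⁻¹' affHyp (G.root i) (G.lev i)

/-- The walk terminates at `v₀`: `v₀` lies in the closure of the final alcove. -/
def Terminates (Wk : Walk C) (v₀ : V) : Prop :=
  ∃ ν ∈ C.Qv, ∃ u ∈ C.W, Wk.alc Wk.len = affT ν u '' C.alcove ∧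
    v₀ ∈ affT ν u '' C.closedAlcove

/-- Two walks are equal as walks: same length and identical sequences of alcoves,
roots and levels. -/
def Equiv (Wk Wk' : Walk C) : Prop :=
  Wk.len = Wk'.len ∧ (∀ i ≤ Wk.len, Wk.alc i = Wk'.alc i) ∧
    ∀ i < Wk.len, Wk.root i = Wk'.root i ∧ Wk.lev i = Wk'.lev i

end Walk

end RootSystemCtx


/-!
If `⟨α, μ⟩ ≠ 0`, integrality and dominance give `⟨α, μ⟩ ≥ 1`. If `⟨α, μ⟩ = 0`, the reflection
`s_α` fixes `μ`, so minimality gives `ℓ(w) ≤ ℓ(w s_α)`, and this forces `w(α) ∈ Φ⁺` because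
`w(α) ∈ -Φ⁺` implies `ℓ(w s_α) < ℓ(w)`. That exchange inequality is a count of inversion sets
`N(·)`: `β ↦ |s_α β|` is an involution of `Φ⁺` carrying `N(w s_α)` onto `N(w) ∆ N(s_α)` and
injecting `N(s_α) \ N(w)` into `(N(w) ∩ N(s_α)) \ {α}`. The first assertion then follows from
`-1 < ⟨γ, v⟩` for every root `γ` and every `v ∈ A`.
-/

open scoped symmDiff

lemma dAct_mul {V : Type*} [AddCommGroup V] [Module ℝ V] (g h : V ≃ₗ[ℝ] V) (γ : Dual ℝ V) :
    dAct (g * h) γ = dAct g (dAct h γ) :=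
  rfl

lemma dAct_neg {V : Type*} [AddCommGroup V] [Module ℝ V] (g : V ≃ₗ[ℝ] V) (γ : Dual ℝ V) :
    dAct g (-γ) = -dAct g γ :=
  rfl

namespace RootSystemCtx

variable {V : Type*} [AddCommGroup V] [Module ℝ V] [FiniteDimensional ℝ V] (C : RootSystemCtx V)

lemma mem_Pos_iff_neg_notMem {β : Dual ℝ V} (hβ : β ∈ C.Φ) : β ∈ C.Pos ↔ -β ∉ C.Pos := by
  rcases C.pos_partition β hβ with h | h <;> tauto

/-- On the span of `Δ` this is the usual height `∑ δ ∈ Δ, c_δ • δ ↦ ∑ δ ∈ Δ, c_δ`. -/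
noncomputable def height : Dual ℝ V →ₗ[ℝ] ℝ :=
  (Basis.extend (C.delta_indep : LinearIndepOn ℝ id (C.Delta : Set (Dual ℝ V)))).constr ℝ
    fun _ => 1

lemma height_of_mem_Delta {δ : Dual ℝ V} (hδ : δ ∈ C.Delta) : C.height δ = 1 := by
  have hΔ : LinearIndepOn ℝ id (C.Delta : Set (Dual ℝ V)) := C.delta_indep
  have := (Basis.extend hΔ).constr_basis ℝ (fun _ => (1 : ℝ)) ⟨δ, hΔ.subset_extend _ hδ⟩
  rwa [Basis.extend_apply_self] at this

lemma height_pos {β : Dual ℝ V} (hβ : β ∈ C.Pos) : 0 < C.height β := by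
  obtain ⟨c, hc⟩ := C.pos_of_delta β hβ
  obtain ⟨δ, hδΔ, hcδ⟩ : ∃ δ ∈ C.Delta, c δ ≠ 0 := by
    by_contra! h
    exact C.root_ne_zero β (C.pos_subset hβ)
      (hc.trans (Finset.sum_eq_zero fun δ hδ => by simp [h δ hδ]))
  rw [hc, map_sum]
  refine Finset.sum_pos' (fun δ hδ => ?_) ⟨δ, hδΔ, ?_⟩ <;>
    simp only [map_smul, C.height_of_mem_Delta ‹_›, smul_eq_mul, mul_one, Nat.cast_nonneg,
      Nat.cast_pos]
  exact Nat.pos_of_ne_zero hcδ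

lemma neg_mem_Pos_of_notMem {γ : Dual ℝ V} (hγ : γ ∈ C.Φ) (h : γ ∉ C.Pos) : -γ ∈ C.Pos :=
  ((C.pos_partition γ hγ).resolve_left fun h' => h h'.1).1

lemma neg_mem_Pos_iff_height_neg {β : Dual ℝ V} (hβ : β ∈ C.Φ) :
    -β ∈ C.Pos ↔ C.height β < 0 := by
  refine ⟨fun h => by simpa using C.height_pos h, fun h => C.neg_mem_Pos_of_notMem hβ ?_⟩
  exact fun hβP => (C.height_pos hβP).not_gt h

lemma dAct_reflection {α : Dual ℝ V} (h : α (C.coroot α) = 2) (β : Dual ℝ V) :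
    dAct (reflection h) β = β - β (C.coroot α) • α := by
  ext v
  simp [dAct, reflection_apply]
  ring

lemma dAct_reflection_self {α : Dual ℝ V} (h : α (C.coroot α) = 2) :
    dAct (reflection h) α = -α := by
  rw [C.dAct_reflection, h]
  module

lemma dAct_reflection_dAct_reflection {α : Dual ℝ V} (h : α (C.coroot α) = 2)
    (β : Dual ℝ V) : dAct (reflection h) (dAct (reflection h) β) = β := by
  ext v
  exact congrArg β (involutive_reflection h v)

lemma reflection_mem_W {α : Dual ℝ V} (hα : α ∈ C.Φ) (h : α (C.coroot α) = 2) :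
    reflection h ∈ C.W := by
  rw [C.W_gen]
  exact Subgroup.subset_closure ⟨α, hα, fun v => reflection_apply v h⟩

def rootStabilizer : Subgroup (V ≃ₗ[ℝ] V) where
  carrier := {g | ∀ γ, dAct g γ ∈ C.Φ ↔ γ ∈ C.Φ}
  mul_mem' {g h} hg hh γ := by rw [dAct_mul]; exact (hg _).trans (hh γ)
  one_mem' _ := Iff.rfl
  inv_mem' {g} hg γ := by rw [← hg, ← dAct_mul, mul_inv_cancel]; rfl

lemma W_le_rootStabilizer : C.W ≤ C.rootStabilizer := by
  rw [C.W_gen, Subgroup.closure_le]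
  rintro g ⟨α, hα, hg⟩ γ
  obtain rfl : g = reflection (C.coroot_self α hα) := LinearEquiv.ext hg
  refine ⟨fun h => ?_, fun h => by rw [dAct_reflection]; exact C.root_reflect_mem α hα γ h⟩
  have := C.root_reflect_mem α hα _ h
  rwa [← C.dAct_reflection (C.coroot_self α hα), C.dAct_reflection_dAct_reflection] at this

lemma dAct_mem_Φ {w : V ≃ₗ[ℝ] V} (hw : w ∈ C.W) {β : Dual ℝ V} (hβ : β ∈ C.Φ) :
    dAct w β ∈ C.Φ :=
  (C.W_le_rootStabilizer hw β).2 hβ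

lemma mem_invSet {w : V ≃ₗ[ℝ] V} {β : Dual ℝ V} :
    β ∈ C.invSet w ↔ β ∈ C.Pos ∧ -(dAct w β) ∈ C.Pos := by
  classical
  simp [invSet]

lemma invSet_subset_Pos (w : V ≃ₗ[ℝ] V) : C.invSet w ⊆ C.Pos :=
  fun _ hβ => (C.mem_invSet.1 hβ).1

lemma mem_invSet_iff_height_neg {w : V ≃ₗ[ℝ] V} (hw : w ∈ C.W) {β : Dual ℝ V}
    (hβ : β ∈ C.Pos) : β ∈ C.invSet w ↔ C.height (dAct w β) < 0 := by
  rw [mem_invSet, C.neg_mem_Pos_iff_height_neg (C.dAct_mem_Φ hw (C.pos_subset hβ)),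
    and_iff_right hβ]

open Classical in
noncomputable def posRep (γ : Dual ℝ V) : Dual ℝ V := if γ ∈ C.Pos then γ else -γ

lemma posRep_of_mem {γ : Dual ℝ V} (hγ : γ ∈ C.Pos) : C.posRep γ = γ := if_pos hγ

lemma posRep_of_neg_mem {γ : Dual ℝ V} (hγ : -γ ∈ C.Pos) : C.posRep γ = -γ := by
  refine if_neg fun h => ?_
  rcases C.pos_partition γ (C.pos_subset h) with h' | h' <;> tauto

lemma posRep_neg {γ : Dual ℝ V} (hγ : γ ∈ C.Φ) : C.posRep (-γ) = C.posRep γ := by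
  rcases C.pos_partition γ hγ with h | h
  · rw [C.posRep_of_neg_mem (by rw [neg_neg]; exact h.1), neg_neg, C.posRep_of_mem h.1]
  · rw [C.posRep_of_mem h.1, C.posRep_of_neg_mem h.1]

lemma posRep_mem_Pos {γ : Dual ℝ V} (hγ : γ ∈ C.Φ) : C.posRep γ ∈ C.Pos := by
  rcases C.pos_partition γ hγ with h | h
  · rw [C.posRep_of_mem h.1]; exact h.1
  · rw [C.posRep_of_neg_mem h.1]; exact h.1

section Reflection

variable {α : Dual ℝ V} (h : α (C.coroot α) = 2)

noncomputable def posReflect (β : Dual ℝ V) : Dual ℝ V := C.posRep (dAct (reflection h) β)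

variable {C h}

lemma posReflect_of_mem_invSet {β : Dual ℝ V} (hβ : β ∈ C.invSet (reflection h)) :
    C.posReflect h β = -dAct (reflection h) β :=
  C.posRep_of_neg_mem (C.mem_invSet.1 hβ).2

lemma posReflect_of_notMem_invSet (hα : α ∈ C.Φ) {β : Dual ℝ V} (hβ : β ∈ C.Pos)
    (hβs : β ∉ C.invSet (reflection h)) : C.posReflect h β = dAct (reflection h) β := by
  refine C.posRep_of_mem ((C.mem_Pos_iff_neg_notMem ?_).2 fun hneg => hβs ?_)
  · exact C.dAct_mem_Φ (C.reflection_mem_W hα h) (C.pos_subset hβ)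
  · exact C.mem_invSet.2 ⟨hβ, hneg⟩

lemma posReflect_mem_Pos (hα : α ∈ C.Φ) {β : Dual ℝ V} (hβ : β ∈ C.Φ) :
    C.posReflect h β ∈ C.Pos :=
  C.posRep_mem_Pos (C.dAct_mem_Φ (C.reflection_mem_W hα h) hβ)

lemma posReflect_posReflect {β : Dual ℝ V} (hβ : β ∈ C.Pos) :
    C.posReflect h (C.posReflect h β) = β := by
  have hsβ : C.posReflect h β = dAct (reflection h) β ∨
      C.posReflect h β = -dAct (reflection h) β := by
    unfold posReflect posRep; split_ifs <;> simp
  rcases hsβ with hsβ | hsβ <;> rw [posReflect, hsβ]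
  · rw [C.dAct_reflection_dAct_reflection, C.posRep_of_mem hβ]
  · rw [dAct_neg, C.dAct_reflection_dAct_reflection, C.posRep_neg (C.pos_subset hβ),
      C.posRep_of_mem hβ]

lemma posReflect_mem_invSet_iff (hα : α ∈ C.Φ) {β : Dual ℝ V} (hβ : β ∈ C.Pos) :
    C.posReflect h β ∈ C.invSet (reflection h) ↔ β ∈ C.invSet (reflection h) := by
  by_cases hβs : β ∈ C.invSet (reflection h)
  · simp only [hβs, iff_true, C.posReflect_of_mem_invSet hβs, mem_invSet, dAct_neg,
      C.dAct_reflection_dAct_reflection, neg_neg]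
    exact ⟨(C.mem_invSet.1 hβs).2, hβ⟩
  · simp only [hβs, iff_false, C.posReflect_of_notMem_invSet hα hβ hβs, mem_invSet,
      C.dAct_reflection_dAct_reflection, not_and]
    exact fun _ => (C.mem_Pos_iff_neg_notMem (C.pos_subset hβ)).1 hβ

open Classical in
lemma mem_invSet_mul_reflection_iff {w : V ≃ₗ[ℝ] V} (hw : w ∈ C.W) (hα : α ∈ C.Φ)
    {β : Dual ℝ V} (hβ : β ∈ C.Pos) :
    β ∈ C.invSet (w * reflection h) ↔
      C.posReflect h β ∈ C.invSet w ∆ C.invSet (reflection h) := by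
  have hsβ := C.dAct_mem_Φ (C.reflection_mem_W hα h) (C.pos_subset hβ)
  have hwsβ := C.dAct_mem_Φ hw hsβ
  rw [Finset.mem_symmDiff, C.posReflect_mem_invSet_iff hα hβ, mem_invSet, mem_invSet,
    and_iff_right hβ, and_iff_right (C.posReflect_mem_Pos hα (C.pos_subset hβ)), dAct_mul]
  by_cases hβs : β ∈ C.invSet (reflection h)
  · simp only [hβs, C.posReflect_of_mem_invSet hβs, dAct_neg, neg_neg, not_true, and_false,
      false_or, true_and]
    rw [C.mem_Pos_iff_neg_notMem hwsβ, not_not]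
  · simp only [hβs, C.posReflect_of_notMem_invSet hα hβ hβs, and_true, not_false_eq_true,
      false_and, or_false]

open Classical in
lemma card_invSet_mul_reflection {w : V ≃ₗ[ℝ] V} (hw : w ∈ C.W) (hα : α ∈ C.Φ) :
    #(C.invSet (w * reflection h)) = #(C.invSet w ∆ C.invSet (reflection h)) := by
  have hPos : ∀ γ ∈ C.invSet w ∆ C.invSet (reflection h), γ ∈ C.Pos := fun γ hγ => by
    rcases Finset.mem_symmDiff.1 hγ with hγ | hγ <;> exact C.invSet_subset_Pos _ hγ.1
  refine card_nbij' (C.posReflect h) (C.posReflect h) (fun β hβ => ?_) (fun γ hγ => ?_)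
    (fun β hβ => C.posReflect_posReflect (C.invSet_subset_Pos _ hβ))
    (fun γ hγ => C.posReflect_posReflect (hPos γ hγ))
  · exact (C.mem_invSet_mul_reflection_iff hw hα (C.invSet_subset_Pos _ hβ)).1 hβ
  · refine (C.mem_invSet_mul_reflection_iff hw hα (C.posReflect_mem_Pos hα ?_)).2 ?_
    · exact C.pos_subset (hPos γ hγ)
    · rwa [C.posReflect_posReflect (hPos γ hγ)]

lemma coroot_pos_of_mem_invSet_reflection (hα : α ∈ C.Pos) {β : Dual ℝ V}
    (hβ : β ∈ C.invSet (reflection h)) : 0 < β (C.coroot α) := by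
  obtain ⟨hβP, hsβ⟩ := C.mem_invSet.1 hβ
  have := C.height_pos hsβ
  rw [C.dAct_reflection, map_neg, map_sub, map_smul, smul_eq_mul] at this
  nlinarith [C.height_pos hβP, C.height_pos hα]

lemma posReflect_self (hα : α ∈ C.Pos) : C.posReflect h α = α := by
  rw [posReflect, C.dAct_reflection_self, C.posRep_neg (C.pos_subset hα), C.posRep_of_mem hα]

lemma posReflect_mem_invSet {w : V ≃ₗ[ℝ] V} (hw : w ∈ C.W) (hα : α ∈ C.Pos)
    (hαw : α ∈ C.invSet w) {β : Dual ℝ V} (hβs : β ∈ C.invSet (reflection h))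
    (hβw : β ∉ C.invSet w) : C.posReflect h β ∈ C.invSet w := by
  have hβP := C.invSet_subset_Pos _ hβs
  have hcoroot := C.coroot_pos_of_mem_invSet_reflection hα hβs
  have hwα := (C.mem_invSet_iff_height_neg hw hα).1 hαw
  have hwβ := (C.mem_invSet_iff_height_neg hw hβP).not.1 hβw
  have hheight : C.height (dAct w (C.posReflect h β)) =
      β (C.coroot α) * C.height (dAct w α) - C.height (dAct w β) := by
    rw [C.posReflect_of_mem_invSet hβs, C.dAct_reflection]
    simp only [dAct, LinearMap.neg_comp, LinearMap.sub_comp, LinearMap.smul_comp, map_neg,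
      map_sub, map_smul, smul_eq_mul]
    ring
  refine (C.mem_invSet_iff_height_neg hw
    (C.posReflect_mem_Pos (C.pos_subset hα) (C.pos_subset hβP))).2 ?_
  rw [hheight]
  nlinarith

open Classical in
lemma card_invSet_reflection_sdiff_lt {w : V ≃ₗ[ℝ] V} (hw : w ∈ C.W) (hα : α ∈ C.Pos)
    (hαw : α ∈ C.invSet w) :
    #(C.invSet (reflection h) \ C.invSet w) < #(C.invSet w ∩ C.invSet (reflection h)) := by
  have hαs : α ∈ C.invSet (reflection h) :=
    C.mem_invSet.2 ⟨hα, by rwa [C.dAct_reflection_self, neg_neg]⟩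
  have hPos : ∀ β ∈ C.invSet (reflection h) \ C.invSet w, β ∈ C.Pos :=
    fun β hβ => C.invSet_subset_Pos _ (mem_sdiff.1 hβ).1
  calc #(C.invSet (reflection h) \ C.invSet w)
      ≤ #((C.invSet w ∩ C.invSet (reflection h)).erase α) := by
        refine card_le_card_of_injOn (C.posReflect h) (fun β hβ => ?_)
          (fun β hβ γ hγ hβγ => ?_)
        · obtain ⟨hβs, hβw⟩ := mem_sdiff.1 hβ
          refine mem_erase.2 ⟨fun hβα => hβw ?_, mem_inter.2 ⟨?_, ?_⟩⟩
          · rwa [← C.posReflect_posReflect (h := h) (hPos β hβ), hβα, C.posReflect_self hα]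
          · exact C.posReflect_mem_invSet hw hα hαw hβs hβw
          · exact (C.posReflect_mem_invSet_iff (C.pos_subset hα) (hPos β hβ)).2 hβs
        · rw [← C.posReflect_posReflect (h := h) (hPos β hβ), hβγ,
            C.posReflect_posReflect (hPos γ hγ)]
    _ < #(C.invSet w ∩ C.invSet (reflection h)) :=
        card_erase_lt_of_mem (mem_inter.2 ⟨hαw, hαs⟩)

theorem len_mul_reflection_lt {w : V ≃ₗ[ℝ] V} (hw : w ∈ C.W) (hα : α ∈ C.Pos)
    (hαw : α ∈ C.invSet w) : C.len (w * reflection h) < C.len w := by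
  classical
  have := C.card_invSet_reflection_sdiff_lt (h := h) hw hα hαw
  rw [len, len, C.card_invSet_mul_reflection hw (C.pos_subset hα), symmDiff_def, sup_eq_union,
    card_union_of_disjoint disjoint_sdiff_sdiff,
    ← card_sdiff_add_card_inter (C.invSet w) (C.invSet (reflection h))]
  omega

end Reflection

lemma one_le_or_eq_zero {μ : V} (hint : C.IsIntegral μ) (hdom : C.IsDominant μ)
    {α : Dual ℝ V} (hα : α ∈ C.Pos) : 1 ≤ α μ ∨ α μ = 0 := by
  obtain ⟨n, hn⟩ := hint α (C.pos_subset hα)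
  have hn0 : 0 ≤ n := by exact_mod_cast hn ▸ hdom α hα
  rw [hn]
  rcases hn0.lt_or_eq with hpos | hzero
  · exact Or.inl (by exact_mod_cast hpos)
  · exact Or.inr (by simp [← hzero])

lemma neg_one_lt_of_mem_alcove {γ : Dual ℝ V} (hγ : γ ∈ C.Φ) {v : V} (hv : v ∈ C.alcove) :
    -1 < γ v := by
  rcases C.pos_partition γ hγ with h | h
  · linarith [(hv γ h.1).1]
  · linarith [(hv _ h.1).2, LinearMap.neg_apply γ v]

end RootSystemCtx

/-- If `μ` is a dominant integral coweight and `w` is a minimal coset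
representative for `μ`, then for every `α ∈ Φ⁺` and every `v` in the fundamental
alcove `A` one has `⟨α, μ⟩ + ⟨w(α), v⟩ > 0`; equivalently, for every `α ∈ Φ⁺`, either
`⟨α, μ⟩ ≥ 1`, or `⟨α, μ⟩ = 0` and `w(α) ∈ Φ⁺`.  (This expresses that `t_{−w(μ)}w` is
the minimal-length element of the coset `t_{−w(μ)}W₀`.) -/
theorem minimal_length_criterion
    {V : Type*} [AddCommGroup V] [Module ℝ V] [FiniteDimensional ℝ V]
    (C : RootSystemCtx V) (μ : V)
    (hint : C.IsIntegral μ) (hdom : C.IsDominant μ)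
    (w : V ≃ₗ[ℝ] V) (hmin : C.IsMinRep w μ) :
    (∀ α ∈ C.Pos, ∀ v ∈ C.alcove, 0 < α μ + dAct w α v) ∧
    (∀ α ∈ C.Pos, 1 ≤ α μ ∨ (α μ = 0 ∧ dAct w α ∈ C.Pos)) := by
  obtain ⟨hw, hmin⟩ := hmin
  have hcases : ∀ α ∈ C.Pos, 1 ≤ α μ ∨ (α μ = 0 ∧ dAct w α ∈ C.Pos) := by
    intro α hα
    refine (C.one_le_or_eq_zero hint hdom hα).imp_right fun hzero => ⟨hzero, ?_⟩
    by_contra hwα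
    have hαw : α ∈ C.invSet w :=
      C.mem_invSet.2 ⟨hα, C.neg_mem_Pos_of_notMem (C.dAct_mem_Φ hw (C.pos_subset hα)) hwα⟩
    have h := C.coroot_self α (C.pos_subset hα)
    have hfix : reflection h μ = μ := by rw [reflection_apply, hzero, zero_smul, sub_zero]
    exact (hmin _ (C.reflection_mem_W (C.pos_subset hα) h) hfix).not_gt
      (C.len_mul_reflection_lt hw hα hαw)
  refine ⟨fun α hα v hv => ?_, hcases⟩
  have hwαv := C.neg_one_lt_of_mem_alcove (C.dAct_mem_Φ hw (C.pos_subset hα)) hv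
  rcases hcases α hα with h1 | ⟨h0, hwα⟩
  · linarith
  · linarith [(hv _ hwα).1]
end

section
/- Let μ be a dominant integral coweight, let w ∈ W₀ be a minimal coset representative for μ, and set x_w := t_{−w(μ)}w. Then: (i) every minimal gallery from A to x_w(A) has exactly ⟨ρ, μ + w(μ)⟩ crossings that are positive for the dominant orientation (and in particular its dimension c⁺ + f⁺ equals ⟨ρ, μ + w(μ)⟩, since a gallery has no foldings); and (ii) ⟨ρ, μ + w(μ)⟩ equals the number of pairs (α, n) ∈ Φ⁺ × ℤ such that the hyperplane H_{α,n} separates the dominant Weyl chamber C from the alcove x_w(A). -/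
/-!
Common framework: a finite crystallographic reduced root system `Φ` inside the dual
of a finite-dimensional real vector space `V`, with a choice of positive roots `Pos`,
simple roots `Delta`, coroots, and the finite Weyl group `W` (a subgroup of linear
automorphisms of `V` generated by the root reflections).  We also set up affine
hyperplanes, the fundamental alcove, separation counts, and alcove walks.
-/

open Module Finset

/-!
For `α ∈ Φ⁺` put `z_α = ⟨w⁻¹α, μ⟩ ∈ ℤ`. On `x_w(A)` the root `α` takes its values in
`(-z_α, 1 - z_α)` if `w⁻¹α > 0` and in `(-z_α - 1, -z_α)` otherwise. In the first case
`z_α ≥ 0` by dominance; in the second `z_α < 0`, because a positive root `β = -w⁻¹α`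
inverted by `w` with `⟨β, μ⟩ = 0` would make `w s_β` shorter than `w` in `w W_{0,μ}`.

A hyperplane `H_{α,n}` separates `C` from an alcove `b` iff `n ≤ 0` and it separates `A`
from `b`. For `b = x_w(A)` these are the `H_{α,n}` with `w⁻¹α > 0` and `1 - z_α ≤ n ≤ 0`,
and `∑_{w⁻¹α > 0} z_α = ⟨ρ, μ + w(μ)⟩`.

A minimal gallery from `A` to `b` crosses each hyperplane separating `A` from `b` exactly
once and no other one. When it crosses `H_{α,n}` it is therefore still on the side of `A`,
so the crossing is positive iff `n ≤ 0`: the positive crossings are again the hyperplanes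
separating `C` from `b`.
-/

section dAct

variable {V : Type*} [AddCommGroup V] [Module ℝ V]

@[simp] lemma dAct_apply (w : V ≃ₗ[ℝ] V) (α : Dual ℝ V) (v : V) :
    dAct w α v = α (w.symm v) := rfl

lemma dAct_mul_s5 (u w : V ≃ₗ[ℝ] V) (α : Dual ℝ V) : dAct (u * w) α = dAct u (dAct w α) := rfl

@[simp] lemma dAct_one (α : Dual ℝ V) : dAct 1 α = α := rfl

@[simp] lemma dAct_neg_s5 (w : V ≃ₗ[ℝ] V) (α : Dual ℝ V) : dAct w (-α) = -dAct w α := rfl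

@[simp] lemma dAct_inv_dAct (w : V ≃ₗ[ℝ] V) (α : Dual ℝ V) : dAct w (dAct w⁻¹ α) = α := by
  rw [← dAct_mul_s5, mul_inv_cancel, dAct_one]

@[simp] lemma dAct_dAct_inv (w : V ≃ₗ[ℝ] V) (α : Dual ℝ V) : dAct w⁻¹ (dAct w α) = α := by
  rw [← dAct_mul_s5, inv_mul_cancel, dAct_one]

lemma dAct_inv_apply (w : V ≃ₗ[ℝ] V) (α : Dual ℝ V) (v : V) : dAct w⁻¹ α v = α (w v) := rfl

end dAct

section Hyperplanes

variable {V : Type*} [AddCommGroup V] [Module ℝ V]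

def IsAbove (α : Dual ℝ V) (n : ℤ) (s : Set V) : Prop := ∀ v ∈ s, (n : ℝ) < α v

variable {α : Dual ℝ V} {n : ℤ} {S T : Set V}

lemma sepBy_iff : SepBy α n S T ↔
    (∀ x ∈ S, α x < n) ∧ IsAbove α n T ∨ IsAbove α n S ∧ ∀ x ∈ T, α x < n := Iff.rfl

lemma isAbove_iff_of_forall_mem_Ioo {k : ℤ} (hS : S.Nonempty)
    (hk : ∀ x ∈ S, α x ∈ Set.Ioo (k : ℝ) (k + 1)) : IsAbove α n S ↔ n ≤ k := by
  obtain ⟨x, hx⟩ := hS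
  refine ⟨fun h => ?_, fun h y hy => lt_of_le_of_lt (by exact_mod_cast h) (hk y hy).1⟩
  have : (n : ℝ) < k + 1 := (h x hx).trans (hk x hx).2
  exact_mod_cast Int.lt_add_one_iff.1 (by exact_mod_cast this)

lemma forall_apply_lt_iff_of_forall_mem_Ioo {k : ℤ} (hS : S.Nonempty)
    (hk : ∀ x ∈ S, α x ∈ Set.Ioo (k : ℝ) (k + 1)) : (∀ x ∈ S, α x < n) ↔ k + 1 ≤ n := by
  obtain ⟨x, hx⟩ := hS
  refine ⟨fun h => ?_, fun h y hy => (hk y hy).2.trans_le (by exact_mod_cast h)⟩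
  have : (k : ℝ) < n := (hk x hx).1.trans (h x hx)
  exact_mod_cast this

lemma sepBy_iff_of_forall_mem_Ioo {k l : ℤ} (hS : S.Nonempty) (hT : T.Nonempty)
    (hkS : ∀ x ∈ S, α x ∈ Set.Ioo (k : ℝ) (k + 1)) (hlT : ∀ x ∈ T, α x ∈ Set.Ioo (l : ℝ) (l + 1)) :
    SepBy α n S T ↔ ¬(IsAbove α n S ↔ IsAbove α n T) := by
  rw [sepBy_iff, forall_apply_lt_iff_of_forall_mem_Ioo hS hkS,
    forall_apply_lt_iff_of_forall_mem_Ioo hT hlT, isAbove_iff_of_forall_mem_Ioo hS hkS,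
    isAbove_iff_of_forall_mem_Ioo hT hlT]
  omega

lemma apply_affT (α : Dual ℝ V) (ν : V) (u : V ≃ₗ[ℝ] V) (v : V) :
    α (affT ν u v) = dAct u⁻¹ α v + α ν :=
  map_add α _ _

lemma ncard_setOf_fst_mem_snd_mem {ι κ : Type*} (s : Finset ι) (t : ι → Finset κ) :
    {p : ι × κ | p.1 ∈ s ∧ p.2 ∈ t p.1}.ncard = ∑ i ∈ s, #(t i) := by
  have : {p : ι × κ | p.1 ∈ s ∧ p.2 ∈ t p.1} =
      (Equiv.sigmaEquivProd ι κ) '' ↑(s.sigma t) := by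
    ext ⟨i, j⟩
    simp
  rw [this, Set.ncard_image_of_injective _ (Equiv.injective _), Set.ncard_coe_finset,
    Finset.card_sigma]

lemma coe_image_eq_and_injOn_of_subset_of_ncard_eq {ι κ : Type*} [DecidableEq κ] {s : Finset ι}
    {f : ι → κ} {S : Set κ} (hS : S ⊆ s.image f) (hcard : S.ncard = #s) :
    (s.image f : Set κ) = S ∧ Set.InjOn f s := by
  have h₁ : S.ncard ≤ #(s.image f) := by
    rw [← Set.ncard_coe_finset]
    exact Set.ncard_le_ncard hS (Finset.finite_toSet _)
  have h₂ : #(s.image f) ≤ #s := Finset.card_image_le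
  refine ⟨(Set.eq_of_subset_of_ncard_le hS ?_ (Finset.finite_toSet _)).symm,
    Finset.card_image_iff.1 (by omega)⟩
  rw [Set.ncard_coe_finset]
  omega

end Hyperplanes

namespace RootSystemCtx

open scoped Classical

variable {V : Type*} [AddCommGroup V] [Module ℝ V] [FiniteDimensional ℝ V] (C : RootSystemCtx V)

section Roots

variable {α γ : Dual ℝ V}

lemma neg_notMem_Pos (hα : α ∈ C.Pos) : -α ∉ C.Pos := by
  rcases C.pos_partition α (C.pos_subset hα) with ⟨_, h⟩ | ⟨_, h⟩
  · exact h
  · exact absurd hα h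

lemma neg_mem_Pos_of_notMem_s5 (hα : α ∈ C.Φ) (h : α ∉ C.Pos) : -α ∈ C.Pos := by
  rcases C.pos_partition α hα with ⟨h', _⟩ | ⟨h', _⟩
  · exact absurd h' h
  · exact h'

lemma neg_mem_Pos_iff (hα : α ∈ C.Φ) : -α ∈ C.Pos ↔ α ∉ C.Pos :=
  ⟨fun h h' => C.neg_notMem_Pos h' h, C.neg_mem_Pos_of_notMem_s5 hα⟩

lemma exists_forall_Delta_eq_one : ∃ v : V, ∀ δ ∈ C.Delta, δ v = 1 := by
  have hs : LinearIndepOn ℝ id (C.Delta : Set (Dual ℝ V)) := C.delta_indep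
  let b := Basis.extend hs
  let φ : Dual ℝ (Dual ℝ V) := b.constr ℝ fun i => if (i : Dual ℝ V) ∈ C.Delta then 1 else 0
  refine ⟨(Module.evalEquiv ℝ V).symm φ, fun δ hδ => ?_⟩
  have hδs : δ ∈ hs.extend (Set.subset_univ _) := hs.subset_extend _ (by simpa using hδ)
  have hb : b ⟨δ, hδs⟩ = δ := Basis.extend_apply_self hs ⟨δ, hδs⟩
  rw [Module.apply_evalEquiv_symm_apply, ← hb, Basis.constr_basis]
  simp [hδ]

lemma chamber_nonempty : C.chamber.Nonempty := by
  obtain ⟨v, hv⟩ := C.exists_forall_Delta_eq_one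
  refine ⟨v, fun α hα => ?_⟩
  obtain ⟨c, hc⟩ := C.pos_of_delta α hα
  have hval : α v = ((∑ δ ∈ C.Delta, c δ : ℕ) : ℝ) := by
    rw [hc, LinearMap.sum_apply]
    push_cast
    exact Finset.sum_congr rfl fun δ hδ => by simp [hv δ hδ]
  rw [hval, Nat.cast_pos, Nat.pos_iff_ne_zero]
  intro h0
  apply C.root_ne_zero α (C.pos_subset hα)
  rw [hc]
  exact Finset.sum_eq_zero fun δ hδ => by simp [Finset.sum_eq_zero_iff.1 h0 δ hδ]

lemma mem_Pos_iff_pos_apply {v : V} (hv : v ∈ C.chamber) (hα : α ∈ C.Φ) :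
    α ∈ C.Pos ↔ 0 < α v := by
  refine ⟨fun h => hv α h, fun h => ?_⟩
  by_contra hn
  have := hv _ (C.neg_mem_Pos_of_notMem_s5 hα hn)
  simp only [LinearMap.neg_apply] at this
  linarith

noncomputable def absRoot (γ : Dual ℝ V) : Dual ℝ V := if γ ∈ C.Pos then γ else -γ

lemma absRoot_of_mem_Pos (h : γ ∈ C.Pos) : C.absRoot γ = γ := if_pos h

lemma absRoot_of_notMem_Pos (h : γ ∉ C.Pos) : C.absRoot γ = -γ := if_neg h

lemma absRoot_mem_Pos (hγ : γ ∈ C.Φ) : C.absRoot γ ∈ C.Pos := by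
  by_cases h : γ ∈ C.Pos
  · rwa [C.absRoot_of_mem_Pos h]
  · rw [C.absRoot_of_notMem_Pos h]
    exact C.neg_mem_Pos_of_notMem_s5 hγ h

lemma absRoot_neg (hγ : γ ∈ C.Φ) : C.absRoot (-γ) = C.absRoot γ := by
  by_cases h : γ ∈ C.Pos
  · rw [C.absRoot_of_notMem_Pos (C.neg_notMem_Pos h), neg_neg, C.absRoot_of_mem_Pos h]
  · rw [C.absRoot_of_notMem_Pos h, C.absRoot_of_mem_Pos (C.neg_mem_Pos_of_notMem_s5 hγ h)]

end Roots

section WeylGroup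

variable {α β γ : Dual ℝ V} {u w : V ≃ₗ[ℝ] V}

lemma reflection_mem_W_s5 (hγ : γ ∈ C.Φ) : Module.reflection (C.coroot_self γ hγ) ∈ C.W := by
  rw [C.W_gen]
  exact Subgroup.subset_closure ⟨γ, hγ, fun v => Module.reflection_apply _ _⟩

lemma dAct_reflection_s5 (hγ : γ ∈ C.Φ) (β : Dual ℝ V) :
    dAct (Module.reflection (C.coroot_self γ hγ)) β = β - β (C.coroot γ) • γ := by
  ext v
  simp [Module.reflection_symm, Module.reflection_apply, mul_comm]

lemma dAct_mem_Φ_s5 (hu : u ∈ C.W) (hα : α ∈ C.Φ) : dAct u α ∈ C.Φ := by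
  rw [C.W_gen] at hu
  induction hu using Subgroup.closure_induction'' generalizing α with
  | mem g hg =>
    obtain ⟨γ, hγ, hg⟩ := hg
    obtain rfl : g = Module.reflection (C.coroot_self γ hγ) := LinearEquiv.ext hg
    rw [C.dAct_reflection_s5 hγ]
    exact C.root_reflect_mem γ hγ α hα
  | inv_mem g hg =>
    obtain ⟨γ, hγ, hg⟩ := hg
    obtain rfl : g = Module.reflection (C.coroot_self γ hγ) := LinearEquiv.ext hg
    rw [Module.reflection_inv, C.dAct_reflection_s5 hγ]
    exact C.root_reflect_mem γ hγ α hα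
  | one => exact hα
  | mul x y _ _ hx hy => exact hx (hy hα)

lemma exists_int_apply_eq_of_mem_Qv (hβ : β ∈ C.Φ) {ν : V} (hν : ν ∈ C.Qv) :
    ∃ z : ℤ, β ν = z := by
  induction hν using AddSubgroup.closure_induction with
  | mem x hx =>
    obtain ⟨α, hα, rfl⟩ := hx
    exact C.crystallographic α hα β hβ
  | zero => exact ⟨0, by simp⟩
  | add x y _ _ hx hy =>
    obtain ⟨a, ha⟩ := hx
    obtain ⟨b, hb⟩ := hy
    exact ⟨a + b, by simp [ha, hb]⟩
  | neg x _ hx =>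
    obtain ⟨a, ha⟩ := hx
    exact ⟨-a, by simp [ha]⟩

lemma absRoot_dAct_absRoot (hu : u ∈ C.W) (hγ : γ ∈ C.Φ) :
    C.absRoot (dAct u (C.absRoot γ)) = C.absRoot (dAct u γ) := by
  by_cases h : γ ∈ C.Pos
  · rw [C.absRoot_of_mem_Pos h]
  · rw [C.absRoot_of_notMem_Pos h, dAct_neg_s5, C.absRoot_neg (C.dAct_mem_Φ_s5 hu hγ)]

/-- `α ↦ |u α|` permutes the positive roots. -/
lemma sum_Pos_absRoot_dAct {M : Type*} [AddCommMonoid M] (hu : u ∈ C.W) (f : Dual ℝ V → M) :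
    ∑ α ∈ C.Pos, f (C.absRoot (dAct u α)) = ∑ β ∈ C.Pos, f β := by
  have inv : ∀ {x : V ≃ₗ[ℝ] V}, x ∈ C.W → ∀ α ∈ C.Pos,
      C.absRoot (dAct x⁻¹ (C.absRoot (dAct x α))) = α := fun hx α hα => by
    rw [C.absRoot_dAct_absRoot (inv_mem hx) (C.dAct_mem_Φ_s5 hx (C.pos_subset hα)),
      dAct_dAct_inv, C.absRoot_of_mem_Pos hα]
  refine Finset.sum_nbij' (fun α => C.absRoot (dAct u α)) (fun β => C.absRoot (dAct u⁻¹ β))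
    (fun α hα => C.absRoot_mem_Pos (C.dAct_mem_Φ_s5 hu (C.pos_subset hα)))
    (fun β hβ => C.absRoot_mem_Pos (C.dAct_mem_Φ_s5 (inv_mem hu) (C.pos_subset hβ)))
    (inv hu) (fun β hβ => ?_) fun _ _ => rfl
  simpa using inv (inv_mem hu) β hβ

lemma rho_apply_add_apply (hw : w ∈ C.W) (μ : V) :
    C.rho (μ + w μ) = ∑ α ∈ C.Pos with dAct w⁻¹ α ∈ C.Pos, dAct w⁻¹ α μ := by
  have hsum : ∑ β ∈ C.Pos, β μ = ∑ α ∈ C.Pos, C.absRoot (dAct w⁻¹ α) μ :=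
    (C.sum_Pos_absRoot_dAct (inv_mem hw) fun β => β μ).symm
  have hterm : ∀ α ∈ C.Pos, C.absRoot (dAct w⁻¹ α) μ + α (w μ) =
      if dAct w⁻¹ α ∈ C.Pos then 2 * dAct w⁻¹ α μ else 0 := fun α _ => by
    rw [← dAct_inv_apply]
    split_ifs with h
    · rw [C.absRoot_of_mem_Pos h]; ring
    · rw [C.absRoot_of_notMem_Pos h, LinearMap.neg_apply]; ring
  simp only [rho, LinearMap.smul_apply, LinearMap.sum_apply, map_add, smul_eq_mul]
  rw [hsum, ← mul_add, ← Finset.sum_add_distrib, Finset.sum_congr rfl hterm,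
    ← Finset.sum_filter, ← Finset.mul_sum]
  ring

end WeylGroup

section Length

variable {γ : Dual ℝ V} {t w : V ≃ₗ[ℝ] V}

lemma len_mul_eq_card (hw : w ∈ C.W) (ht : t ∈ C.W) (htt : t * t = 1) :
    C.len (w * t) = #{β ∈ C.Pos | -dAct w β ∈ C.Pos ↔ dAct t β ∈ C.Pos} := by
  have hterm : ∀ α ∈ C.Pos, (-dAct w (C.absRoot (dAct t α)) ∈ C.Pos ↔
      dAct t (C.absRoot (dAct t α)) ∈ C.Pos) ↔ -dAct w (dAct t α) ∈ C.Pos := fun α hα => by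
    have htα := C.dAct_mem_Φ_s5 ht (C.pos_subset hα)
    have htt' : dAct t (dAct t α) = α := by rw [← dAct_mul_s5, htt, dAct_one]
    by_cases h : dAct t α ∈ C.Pos
    · simp only [C.absRoot_of_mem_Pos h, htt', hα, iff_true]
    · simp only [C.absRoot_of_notMem_Pos h, dAct_neg_s5, htt', neg_neg, C.neg_notMem_Pos hα,
        iff_false, C.neg_mem_Pos_iff (C.dAct_mem_Φ_s5 hw htα)]
  rw [len, invSet, Finset.card_filter, Finset.card_filter]
  refine Eq.trans ?_ (C.sum_Pos_absRoot_dAct ht _)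
  exact Finset.sum_congr rfl fun α hα => if_congr (by rw [hterm α hα, dAct_mul_s5]) rfl rfl

lemma dAct_dAct_reflection_mem_Pos {β : Dual ℝ V} (hw : w ∈ C.W) (hγ : γ ∈ C.Pos)
    (hwγ : dAct w γ ∉ C.Pos) (hβ : β ∈ C.Pos)
    (htβ : dAct (Module.reflection (C.coroot_self γ (C.pos_subset hγ))) β ∉ C.Pos)
    (hwβ : dAct w β ∈ C.Pos) :
    dAct w (dAct (Module.reflection (C.coroot_self γ (C.pos_subset hγ))) β) ∈ C.Pos := by
  obtain ⟨v₀, hv₀⟩ := C.chamber_nonempty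
  have hβΦ := C.pos_subset hβ
  have hγΦ := C.pos_subset hγ
  have hsign : ∀ {x}, x ∈ C.Φ → (x ∈ C.Pos ↔ 0 < x v₀) := C.mem_Pos_iff_pos_apply hv₀
  have hwsign : ∀ {x}, x ∈ C.Φ → (dAct w x ∈ C.Pos ↔ 0 < x (w.symm v₀)) := fun hx =>
    hsign (C.dAct_mem_Φ_s5 hw hx)
  rw [hsign (C.dAct_mem_Φ_s5 (C.reflection_mem_W_s5 hγΦ) hβΦ)] at htβ
  rw [hwsign hγΦ] at hwγ
  rw [hwsign hβΦ] at hwβ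
  rw [hwsign (C.dAct_mem_Φ_s5 (C.reflection_mem_W_s5 hγΦ) hβΦ)]
  simp only [C.dAct_reflection_s5 hγΦ, LinearMap.sub_apply, LinearMap.smul_apply, smul_eq_mul,
    not_lt] at htβ hwγ ⊢
  have hcoef : 0 < β (C.coroot γ) := by nlinarith [hv₀ β hβ, hv₀ γ hγ]
  nlinarith

/-- `β ↦ -s_γ β` injects the left-hand set into the right-hand one minus `γ`. -/
lemma card_filter_reflection_lt (hw : w ∈ C.W) (hγ : γ ∈ C.Pos) (hwγ : -dAct w γ ∈ C.Pos) :
    #{β ∈ C.Pos | dAct (Module.reflection (C.coroot_self γ (C.pos_subset hγ))) β ∉ C.Pos ∧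
        -dAct w β ∉ C.Pos} <
      #{β ∈ C.Pos | dAct (Module.reflection (C.coroot_self γ (C.pos_subset hγ))) β ∉ C.Pos ∧
        -dAct w β ∈ C.Pos} := by
  have hwγ' := (C.neg_mem_Pos_iff (C.dAct_mem_Φ_s5 hw (C.pos_subset hγ))).1 hwγ
  set t := Module.reflection (C.coroot_self γ (C.pos_subset hγ))
  have htt : ∀ x, dAct t (dAct t x) = x := fun x => by
    simpa [t, Module.reflection_inv] using dAct_dAct_inv t x
  have htγ : dAct t γ = -γ := by
    rw [C.dAct_reflection_s5 (C.pos_subset hγ), C.coroot_self γ (C.pos_subset hγ), two_smul]; abel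
  set P := ({β ∈ C.Pos | dAct t β ∉ C.Pos ∧ -dAct w β ∈ C.Pos} : Finset _)
  have hmaps : ∀ β ∈ C.Pos, dAct t β ∉ C.Pos → -dAct w β ∉ C.Pos → -dAct t β ∈ P.erase γ := by
    intro β hβ htβ hwβ
    have htβΦ := C.dAct_mem_Φ_s5 (C.reflection_mem_W_s5 (C.pos_subset hγ)) (C.pos_subset hβ)
    rw [C.neg_mem_Pos_iff (C.dAct_mem_Φ_s5 hw (C.pos_subset hβ)), not_not] at hwβ
    refine Finset.mem_erase.2 ⟨fun h => ?_, Finset.mem_filter.2 ⟨?_, ?_, ?_⟩⟩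
    · have : β = γ := by rw [← htt β, ← neg_neg (dAct t β), h, dAct_neg_s5, htγ, neg_neg]
      exact C.neg_notMem_Pos (this ▸ hwβ) hwγ
    · exact (C.neg_mem_Pos_iff htβΦ).2 htβ
    · simpa only [dAct_neg_s5, htt] using C.neg_notMem_Pos hβ
    · simpa only [dAct_neg_s5, neg_neg] using C.dAct_dAct_reflection_mem_Pos hw hγ hwγ' hβ htβ hwβ
  have hγmem : γ ∈ P := by
    rw [Finset.mem_filter, htγ]
    exact ⟨hγ, C.neg_notMem_Pos hγ, hwγ⟩
  refine lt_of_le_of_lt (Finset.card_le_card_of_injOn (fun β => -dAct t β)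
    (fun β hβ => ?_) fun β _ β' _ h => ?_) (Finset.card_erase_lt_of_mem hγmem)
  · obtain ⟨hβ, htβ, hwβ⟩ := Finset.mem_filter.1 hβ
    exact hmaps β hβ htβ hwβ
  · simpa only [neg_inj, htt] using congrArg (dAct t) (neg_inj.1 h)

lemma len_mul_reflection_lt_s5 (hw : w ∈ C.W) (hγ : γ ∈ C.Pos) (hwγ : -dAct w γ ∈ C.Pos) :
    C.len (w * Module.reflection (C.coroot_self γ (C.pos_subset hγ))) < C.len w := by
  have hlt := C.card_filter_reflection_lt hw hγ hwγ
  set t := Module.reflection (C.coroot_self γ (C.pos_subset hγ))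
  have htt : t * t = 1 := LinearEquiv.ext (Module.involutive_reflection _)
  have hsplit : ∀ (q : Dual ℝ V → Prop) [DecidablePred q], #{β ∈ C.Pos | q β} =
      #{β ∈ C.Pos | dAct t β ∈ C.Pos ∧ q β} + #{β ∈ C.Pos | dAct t β ∉ C.Pos ∧ q β} := by
    intro q _
    rw [← Finset.card_filter_add_card_filter_not (fun β => dAct t β ∈ C.Pos),
      Finset.filter_filter, Finset.filter_filter]
    simp only [and_comm]
  have h₁ : #{β ∈ C.Pos | dAct t β ∈ C.Pos ∧ (-dAct w β ∈ C.Pos ↔ dAct t β ∈ C.Pos)} =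
      #{β ∈ C.Pos | dAct t β ∈ C.Pos ∧ -dAct w β ∈ C.Pos} :=
    congrArg _ (Finset.filter_congr fun _ _ => by tauto)
  have h₂ : #{β ∈ C.Pos | dAct t β ∉ C.Pos ∧ (-dAct w β ∈ C.Pos ↔ dAct t β ∈ C.Pos)} =
      #{β ∈ C.Pos | dAct t β ∉ C.Pos ∧ -dAct w β ∉ C.Pos} :=
    congrArg _ (Finset.filter_congr fun _ _ => by tauto)
  rw [C.len_mul_eq_card hw (C.reflection_mem_W_s5 (C.pos_subset hγ)) htt,
    hsplit, h₁, h₂, len, invSet, hsplit fun β => -dAct w β ∈ C.Pos]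
  omega

end Length

section MinRep

variable {C} {w : V ≃ₗ[ℝ] V}

lemma IsMinRep.pos_apply_of_mem_invSet {μ : V} {β : Dual ℝ V} (hdom : C.IsDominant μ)
    (hmin : C.IsMinRep w μ) (hβ : β ∈ C.invSet w) : 0 < β μ := by
  obtain ⟨hβ, hwβ⟩ := Finset.mem_filter.1 hβ
  refine (hdom β hβ).lt_of_ne fun h => ?_
  have hfix : Module.reflection (C.coroot_self β (C.pos_subset hβ)) μ = μ := by
    rw [Module.reflection_apply, ← h, zero_smul, sub_zero]
  have := hmin.2 _ (C.reflection_mem_W_s5 (C.pos_subset hβ)) hfix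
  have := C.len_mul_reflection_lt_s5 hmin.1 hβ hwβ
  omega

end MinRep

section Alcoves

variable {α : Dual ℝ V} {n : ℤ} {b : Set V}

lemma alcove_subset_chamber : C.alcove ⊆ C.chamber := fun _ hv α hα => (hv α hα).1

lemma alcove_nonempty : C.alcove.Nonempty := by
  obtain ⟨v, hv⟩ := C.chamber_nonempty
  set M : ℝ := ∑ α ∈ C.Pos, α v
  have hM : 0 ≤ M := Finset.sum_nonneg fun α hα => (hv α hα).le
  refine ⟨(M + 1)⁻¹ • v, fun α hα => ?_⟩
  have hle : α v ≤ M := Finset.single_le_sum (fun β hβ => (hv β hβ).le) hα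
  rw [map_smul, smul_eq_mul, inv_mul_lt_one₀ (by positivity)]
  exact ⟨by have := hv α hα; positivity, by linarith⟩

lemma apply_mem_Ioo_of_mem_alcove (hα : α ∈ C.Φ) {v : V} (hv : v ∈ C.alcove) :
    α v ∈ Set.Ioo ((if α ∈ C.Pos then 0 else -1 : ℤ) : ℝ)
      ((if α ∈ C.Pos then 0 else -1 : ℤ) + 1) := by
  split_ifs with h
  · simpa using hv α h
  · have := hv _ (C.neg_mem_Pos_of_notMem_s5 hα h)
    simp only [LinearMap.neg_apply] at this
    constructor <;> push_cast <;> linarith [this.1, this.2]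

lemma isAbove_alcove_iff (hα : α ∈ C.Pos) : IsAbove α n C.alcove ↔ n ≤ 0 :=
  isAbove_iff_of_forall_mem_Ioo (k := 0) C.alcove_nonempty fun _ hv => by simpa using hv α hα

lemma isAbove_chamber_iff (hα : α ∈ C.Pos) : IsAbove α n C.chamber ↔ n ≤ 0 :=
  ⟨fun h => (C.isAbove_alcove_iff hα).1 fun v hv => h v (C.alcove_subset_chamber hv),
    fun h v hv => lt_of_le_of_lt (by exact_mod_cast h) (hv α hα)⟩

lemma not_forall_chamber_apply_lt (hα : α ∈ C.Pos) : ¬ ∀ v ∈ C.chamber, α v < n := by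
  intro h
  obtain ⟨v, hv⟩ := C.chamber_nonempty
  have hαv := hv α hα
  have hmem : ((|(n : ℝ)| + 1) / α v) • v ∈ C.chamber := fun β hβ => by
    rw [map_smul, smul_eq_mul]
    have := hv β hβ
    positivity
  have := h _ hmem
  rw [map_smul, smul_eq_mul, div_mul_cancel₀ _ hαv.ne'] at this
  linarith [le_abs_self (n : ℝ)]

lemma sepBy_chamber_iff (hα : α ∈ C.Pos) :
    SepBy α n C.chamber b ↔ n ≤ 0 ∧ ∀ x ∈ b, α x < n := by
  rw [sepBy_iff, C.isAbove_chamber_iff hα]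
  have := C.not_forall_chamber_apply_lt (n := n) hα
  tauto

lemma sepBy_alcove_iff (hα : α ∈ C.Pos) :
    SepBy α n C.alcove b ↔ 1 ≤ n ∧ IsAbove α n b ∨ n ≤ 0 ∧ ∀ x ∈ b, α x < n := by
  rw [sepBy_iff, C.isAbove_alcove_iff hα,
    forall_apply_lt_iff_of_forall_mem_Ioo (k := 0) C.alcove_nonempty fun _ hv => by
      simpa using hv α hα]
  simp

def sepSet (S T : Set V) : Set (Dual ℝ V × ℤ) := {p | p.1 ∈ C.Pos ∧ SepBy p.1 p.2 S T}

lemma sepSet_chamber (b : Set V) :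
    C.sepSet C.chamber b = {p ∈ C.sepSet C.alcove b | p.2 ≤ 0} := by
  ext ⟨α, n⟩
  simp only [sepSet, Set.mem_ofPred_eq]
  constructor
  · rintro ⟨hα, h⟩
    rw [C.sepBy_chamber_iff hα] at h
    exact ⟨⟨hα, (C.sepBy_alcove_iff hα).2 (Or.inr h)⟩, h.1⟩
  · rintro ⟨⟨hα, h⟩, hn⟩
    rw [C.sepBy_alcove_iff hα] at h
    refine ⟨hα, (C.sepBy_chamber_iff hα).2 ?_⟩
    rcases h with h | h
    · omega
    · exact h

lemma sepCount_chamber_eq_sum (hb : b.Nonempty) (k : Dual ℝ V → ℤ)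
    (hk : ∀ α ∈ C.Pos, ∀ x ∈ b, α x ∈ Set.Ioo (k α : ℝ) (k α + 1)) :
    C.sepCount C.chamber b = ∑ α ∈ C.Pos, (-k α).toNat := by
  have : {p : Dual ℝ V × ℤ | p.1 ∈ C.Pos ∧ SepBy p.1 p.2 C.chamber b} =
      {p | p.1 ∈ C.Pos ∧ p.2 ∈ Finset.Icc (k p.1 + 1) 0} := by
    ext ⟨α, n⟩
    simp only [Set.mem_ofPred_eq, Finset.mem_Icc]
    refine and_congr_right fun hα => ?_
    rw [C.sepBy_chamber_iff hα, forall_apply_lt_iff_of_forall_mem_Ioo hb (hk α hα)]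
    tauto
  rw [sepCount, this]
  refine (ncard_setOf_fst_mem_snd_mem C.Pos fun α => Finset.Icc (k α + 1) 0).trans ?_
  exact Finset.sum_congr rfl fun α _ => by rw [Int.card_Icc]; congr 1; ring

section AffineImages

variable {C} {α : Dual ℝ V} {n : ℤ} {ν : V} {u : V ≃ₗ[ℝ] V} {b S T : Set V}

lemma apply_affT_mem_Ioo (hα : dAct u⁻¹ α ∈ C.Φ) {q : ℤ} (hq : α ν = q) {v : V}
    (hv : v ∈ C.alcove) :
    α (affT ν u v) ∈ Set.Ioo ((q + if dAct u⁻¹ α ∈ C.Pos then 0 else -1 : ℤ) : ℝ)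
      ((q + if dAct u⁻¹ α ∈ C.Pos then 0 else -1 : ℤ) + 1) := by
  have := C.apply_mem_Ioo_of_mem_alcove hα hv
  set k : ℤ := if dAct u⁻¹ α ∈ C.Pos then 0 else -1
  rw [apply_affT, hq]
  push_cast at this ⊢
  constructor <;> linarith [this.1, this.2]

lemma IsAlcoveSet.nonempty (hb : C.IsAlcoveSet b) : b.Nonempty := by
  obtain ⟨ν, -, u, -, rfl⟩ := hb
  exact C.alcove_nonempty.image _

lemma IsAlcoveSet.exists_int_forall_mem_Ioo (hb : C.IsAlcoveSet b) (hα : α ∈ C.Φ) :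
    ∃ k : ℤ, ∀ x ∈ b, α x ∈ Set.Ioo (k : ℝ) (k + 1) := by
  obtain ⟨ν, hν, u, hu, rfl⟩ := hb
  obtain ⟨q, hq⟩ := C.exists_int_apply_eq_of_mem_Qv hα hν
  exact ⟨_, fun _ ⟨v, hv, hx⟩ => hx ▸ apply_affT_mem_Ioo (C.dAct_mem_Φ_s5 (inv_mem hu) hα) hq hv⟩

lemma IsAlcoveSet.sepBy_iff (hS : C.IsAlcoveSet S) (hT : C.IsAlcoveSet T) (hα : α ∈ C.Φ) :
    SepBy α n S T ↔ ¬(IsAbove α n S ↔ IsAbove α n T) := by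
  obtain ⟨k, hk⟩ := hS.exists_int_forall_mem_Ioo hα
  obtain ⟨l, hl⟩ := hT.exists_int_forall_mem_Ioo hα
  exact sepBy_iff_of_forall_mem_Ioo hS.nonempty hT.nonempty hk hl

end AffineImages

theorem sepCount_chamber_image_affT {μ : V} {w : V ≃ₗ[ℝ] V} (hint : C.IsIntegral μ)
    (hdom : C.IsDominant μ) (hmin : C.IsMinRep w μ) :
    (C.sepCount C.chamber (affT (-(w μ)) w '' C.alcove) : ℝ) = C.rho (μ + w μ) := by
  have hw := hmin.1
  have hΦ : ∀ α ∈ C.Pos, dAct w⁻¹ α ∈ C.Φ := fun α hα =>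
    C.dAct_mem_Φ_s5 (inv_mem hw) (C.pos_subset hα)
  set z : Dual ℝ V → ℤ := fun α => ⌊dAct w⁻¹ α μ⌋
  have hz : ∀ α ∈ C.Pos, (z α : ℝ) = dAct w⁻¹ α μ := fun α hα => by
    obtain ⟨n, hn⟩ := hint _ (hΦ α hα)
    simp only [z, hn, Int.floor_intCast]
  have hν : ∀ α ∈ C.Pos, α (-(w μ)) = ((-z α : ℤ) : ℝ) := fun α hα => by
    rw [Int.cast_neg, hz α hα, map_neg, dAct_inv_apply]
  rw [C.sepCount_chamber_eq_sum (C.alcove_nonempty.image _)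
      (fun α => -z α + if dAct w⁻¹ α ∈ C.Pos then 0 else -1)
      fun α hα _ ⟨v, hv, hx⟩ => hx ▸ apply_affT_mem_Ioo (hΦ α hα) (hν α hα) hv,
    C.rho_apply_add_apply hw, Finset.sum_filter, Nat.cast_sum]
  refine Finset.sum_congr rfl fun α hα => ?_
  split_ifs with h
  · have : 0 ≤ z α := by exact_mod_cast (hz α hα).symm ▸ hdom _ h
    rw [add_zero, neg_neg, ← hz α hα]
    exact_mod_cast Int.toNat_of_nonneg this
  · have hinv : -dAct w⁻¹ α ∈ C.invSet w :=
      Finset.mem_filter.2 ⟨C.neg_mem_Pos_of_notMem_s5 (hΦ α hα) h, by simpa using hα⟩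
    have := hmin.pos_apply_of_mem_invSet hdom hinv
    rw [LinearMap.neg_apply, ← hz α hα] at this
    have : z α < 0 := by exact_mod_cast neg_pos.1 this
    rw [Int.toNat_eq_zero.2 (by omega), Nat.cast_zero]

end Alcoves

namespace Walk

variable {C : RootSystemCtx V} (G : Walk C) {i k : ℕ} {β : Dual ℝ V} {m : ℤ} {b : Set V}

def hyp (i : ℕ) : Dual ℝ V × ℤ := (G.root i, G.lev i)

lemma sepBy_alc_succ_iff (hi : i < G.len) (hc : G.IsCrossing i) (hβ : β ∈ C.Pos) :
    SepBy β m (G.alc i) (G.alc (i + 1)) ↔ (β, m) = G.hyp i := by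
  rw [(G.step i hi).resolve_left hc]
  refine ⟨fun h => ?_, fun h => ?_⟩
  · obtain ⟨rfl, rfl⟩ := (G.wall i hi).2.2 β hβ m h
    rfl
  · obtain ⟨rfl, rfl⟩ := Prod.mk.inj h
    exact (G.wall i hi).2.1

lemma isAbove_alc_succ_iff (hi : i < G.len) (hc : G.IsCrossing i) (hβ : β ∈ C.Pos) :
    (IsAbove β m (G.alc (i + 1)) ↔ IsAbove β m (G.alc i)) ↔ G.hyp i ≠ (β, m) := by
  rw [ne_comm, Ne, ← G.sepBy_alc_succ_iff hi hc hβ,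
    (G.isAlcove i hi.le).sepBy_iff (G.isAlcove (i + 1) hi) (C.pos_subset hβ)]
  tauto

lemma isAbove_alc_iff_of_forall_ne (hk : k ≤ G.len) (hcross : ∀ i < k, G.IsCrossing i)
    (hβ : β ∈ C.Pos) (hne : ∀ i < k, G.hyp i ≠ (β, m)) :
    IsAbove β m (G.alc k) ↔ IsAbove β m C.alcove := by
  induction k with
  | zero => rw [G.start]
  | succ k ih =>
    rw [(G.isAbove_alc_succ_iff hk (hcross k k.lt_succ_self) hβ).2 (hne k k.lt_succ_self)]
    exact ih (by omega) (fun i hi => hcross i (by omega)) fun i hi => hne i (by omega)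

lemma exists_hyp_eq_of_mem_sepSet (hcross : ∀ i < G.len, G.IsCrossing i) {p : Dual ℝ V × ℤ}
    (hp : p ∈ C.sepSet C.alcove (G.alc G.len)) : ∃ i < G.len, G.hyp i = p := by
  obtain ⟨β, m⟩ := p
  obtain ⟨hβ, hsep⟩ := hp
  by_contra! hne
  have hA : C.IsAlcoveSet C.alcove := G.start ▸ G.isAlcove 0 (Nat.zero_le _)
  rw [hA.sepBy_iff (G.isAlcove _ le_rfl) (C.pos_subset hβ)] at hsep
  exact hsep (G.isAbove_alc_iff_of_forall_ne le_rfl hcross hβ hne).symm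

variable {G}

lemma IsMinGallery.coe_image_hyp_and_injOn (hG : G.IsMinGallery b) :
    ((Finset.range G.len).image G.hyp : Set (Dual ℝ V × ℤ)) = C.sepSet C.alcove b ∧
      Set.InjOn G.hyp (Finset.range G.len) := by
  obtain ⟨hcross, rfl, hlen⟩ := hG
  refine coe_image_eq_and_injOn_of_subset_of_ncard_eq (fun p hp => ?_) ?_
  · obtain ⟨i, hi, rfl⟩ := G.exists_hyp_eq_of_mem_sepSet hcross hp
    exact Finset.mem_image_of_mem _ (Finset.mem_range.2 hi)
  · rw [Finset.card_range]
    exact hlen.symm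

lemma IsMinGallery.posAt_iff (hG : G.IsMinGallery b) (hi : i < G.len) :
    G.PosAt i ↔ G.lev i ≤ 0 := by
  have hinj := hG.coe_image_hyp_and_injOn.2
  have hroot := (G.wall i hi).1
  refine (G.isAbove_alc_iff_of_forall_ne hi.le (fun j hj => hG.1 j (hj.trans hi)) hroot
    fun j hj h => hj.ne ?_).trans (C.isAbove_alcove_iff hroot)
  exact hinj (Finset.mem_range.2 (hj.trans hi)) (Finset.mem_range.2 hi) h

lemma IsMinGallery.fPlus_eq_zero (hG : G.IsMinGallery b) : G.fPlus = 0 :=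
  Finset.card_eq_zero.2 <| Finset.filter_eq_empty_iff.2 fun i hi =>
    hG.1 i (Finset.mem_range.1 hi)

lemma IsMinGallery.cPlus_eq_sepCount_chamber (hG : G.IsMinGallery b) :
    G.cPlus = C.sepCount C.chamber b := by
  obtain ⟨himage, hinj⟩ := hG.coe_image_hyp_and_injOn
  calc G.cPlus = #{i ∈ Finset.range G.len | G.lev i ≤ 0} :=
        congrArg _ <| Finset.filter_congr fun i hi => by
          have hi := Finset.mem_range.1 hi
          exact ⟨fun h => (hG.posAt_iff hi).1 h.2, fun h => ⟨hG.1 i hi, (hG.posAt_iff hi).2 h⟩⟩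
    _ = #{p ∈ (Finset.range G.len).image G.hyp | p.2 ≤ 0} := by
        rw [Finset.filter_image, Finset.card_image_of_injOn (hinj.mono (Finset.filter_subset _ _))]
        rfl
    _ = C.sepCount C.chamber b := by
        rw [sepCount, ← sepSet, sepSet_chamber, ← himage, ← Set.ncard_coe_finset,
          Finset.coe_filter]
        rfl

end Walk

end RootSystemCtx

/-- Let `μ` be a dominant integral coweight, `w` a minimal coset
representative for `μ`, and `x_w := t_{−w(μ)}w`.  Then (i) every minimal gallery from
`A` to `x_w(A)` has exactly `⟨ρ, μ + w(μ)⟩` crossings positive for the dominant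
orientation (and its dimension `c⁺ + f⁺` equals `⟨ρ, μ + w(μ)⟩`), and (ii)
`⟨ρ, μ + w(μ)⟩` equals the number of affine hyperplanes `H_{α,n}` separating the
dominant Weyl chamber from the alcove `x_w(A)`. -/
theorem minimal_gallery_dimension
    {V : Type*} [AddCommGroup V] [Module ℝ V] [FiniteDimensional ℝ V]
    (C : RootSystemCtx V) (μ : V)
    (hint : C.IsIntegral μ) (hdom : C.IsDominant μ)
    (w : V ≃ₗ[ℝ] V) (hmin : C.IsMinRep w μ) :
    (∀ G : RootSystemCtx.Walk C,
       G.IsMinGallery (affT (-(w μ)) w '' C.alcove) →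
       (G.cPlus : ℝ) = C.rho (μ + w μ) ∧
       ((G.cPlus + G.fPlus : ℕ) : ℝ) = C.rho (μ + w μ)) ∧
    (C.sepCount C.chamber (affT (-(w μ)) w '' C.alcove) : ℝ) = C.rho (μ + w μ) := by
  have hsep := C.sepCount_chamber_image_affT hint hdom hmin
  refine ⟨fun G hG => ?_, hsep⟩
  rw [hG.fPlus_eq_zero, add_zero, hG.cPlus_eq_sepCount_chamber]
  exact ⟨hsep, hsep⟩
end
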